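/- Let N_M be a C^m I-net on the finite multiset M, and N_{S_M} the corresponding CI-net on the indexed-copy set S_M (consisting of the translated statements c̄ for c ∈ N_M together with the statements cs_i = {o_i ▷ o_{i+1}}). If M_a ⇝ M_b is a CI-flip with respect to a statement c ∈ N_M, then there exists S_{M_a} ∈ ss(M_a) such that S_{M_a} ⇝ overline{M_b} is a CI-flip with respect to c̄ ∈ N_{S_M}; conversely, if S_{M_a} ⇝ S_{M_b} is a CI-flip w.r.t. c̄ for some S_{M_a} ∈ ss(M_a) and S_{M_b} ∈ ss(M_b), then M_a ⇝ M_b is a CI-flip w.r.t. c. -/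

import Mathlib

variable {O : Type*} [DecidableEq O]

/-- A strict partial order: irreflexive, asymmetric, transitive. -/
def IsPrefRel {α : Type*} (r : α → α → Prop) : Prop :=
  (∀ a, ¬ r a a) ∧ (∀ a b, r a b → ¬ r b a) ∧ (∀ a b c, r a b → r b c → r a c)

/-- A `CᵐI`-statement `M⁺, M⁻ : M₁ ▷ M₂` on the finite multiset `M`. -/
structure CmIStmt (O : Type*) [DecidableEq O] (M : Multiset O) where
  mp : Multiset O
  mm : Multiset O
  m1 : Multiset O
  m2 : Multiset O
  hp : mp ≤ M
  hm : mm ≤ M - mp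
  h1 : m1 ≤ M - (mp + mm)
  h2 : m2 ≤ M - (mp + mm)
  n1 : m1 ≠ 0
  n2 : m2 ≠ 0
  d12 : m1 ∩ m2 = 0

/-- `r` satisfies a `CᵐI`-statement. -/
def SatCmStmt (M : Multiset O) (r : Multiset O → Multiset O → Prop)
    (c : CmIStmt O M) : Prop :=
  ∀ M' ≤ M - (c.mp + c.mm + c.m1 + c.m2),
    r (M' + c.mp + c.m1) (M' + c.mp + c.m2)

/-- Monotonicity on sub-multisets of `M`. -/
def MonotonicOn (M : Multiset O) (r : Multiset O → Multiset O → Prop) : Prop :=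
  ∀ a b : Multiset O, a ≤ M → b < a → r a b

/-- Strict-partial-order conditions restricted to sub-multisets of `M`. -/
def IsPrefRelOn (M : Multiset O) (r : Multiset O → Multiset O → Prop) : Prop :=
  (∀ a, a ≤ M → ¬ r a a) ∧
  (∀ a b, a ≤ M → b ≤ M → r a b → ¬ r b a) ∧
  (∀ a b c, a ≤ M → b ≤ M → c ≤ M → r a b → r b c → r a c)

/-- `r` satisfies a `CᵐI`-net. -/
def SatCmNet (M : Multiset O) (r : Multiset O → Multiset O → Prop)
    (N : Set (CmIStmt O M)) : Prop :=
  MonotonicOn M r ∧ ∀ c ∈ N, SatCmStmt M r c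

/-- Satisfiability of a `CᵐI`-net. -/
def CmSatisfiable (M : Multiset O) (N : Set (CmIStmt O M)) : Prop :=
  ∃ r : Multiset O → Multiset O → Prop, IsPrefRelOn M r ∧ SatCmNet M r N

/-- CI-flip with respect to a single `CᵐI`-statement. -/
def CmFlipStmt (M : Multiset O) (c : CmIStmt O M) (a b : Multiset O) : Prop :=
  ∃ M' ≤ M - (c.mp + c.mm + c.m1 + c.m2),
    a = M' + c.mp + c.m1 ∧ b = M' + c.mp + c.m2

/-- Worsening flip for a `CᵐI`-net: a `⊃`-flip within `M` or a CI-flip. -/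
def CmWFlip (M : Multiset O) (N : Set (CmIStmt O M)) (a b : Multiset O) : Prop :=
  (b < a ∧ a ≤ M) ∨ ∃ c ∈ N, CmFlipStmt M c a b

/-- The intersection of all preference relations satisfying `N`. -/
def CmInduced (M : Multiset O) (N : Set (CmIStmt O M)) (a b : Multiset O) : Prop :=
  ∀ r : Multiset O → Multiset O → Prop, IsPrefRelOn M r ∧ SatCmNet M r N → r a b

variable [Fintype O]

/-- The set of indexed copies `{(o, i) : 1 ≤ i ≤ m_M(o)}`. -/
def SMset (M : Multiset O) : Finset (O × ℕ) :=
  Finset.univ.biUnion fun o : O => (Finset.Icc 1 (M.count o)).image fun i => (o, i)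

/-- The block of indexed copies `{o_a, ..., o_b}` of `o`. -/
def block (o : O) (a b : ℕ) : Finset (O × ℕ) :=
  (Finset.Icc a b).image fun i => (o, i)

/-- `S ∈ ss(M')`: `S ⊆ S_M` and for every `o`, `S` has exactly `m_{M'}(o)`
indexed copies of `o`. -/
def InSS (M M' : Multiset O) (S : Finset (O × ℕ)) : Prop :=
  S ⊆ SMset M ∧ ∀ o : O, (S.filter fun p => p.1 = o).card = M'.count o

/-- `overline{M'} = ⋃_o {o_1, ..., o_{m_{M'}(o)}}`. -/
def ovl (M' : Multiset O) : Finset (O × ℕ) :=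
  Finset.univ.biUnion fun o : O => block o 1 (M'.count o)

/-- One step of the index-shifting order `>_i` on subsets of `S_M`: the
symmetric difference is `{o_i, o_{i+1}}` with `o_i ∈ S₁`, `o_{i+1} ∈ S₂`. -/
def IStep (M : Multiset O) (S1 S2 : Finset (O × ℕ)) : Prop :=
  S1 ⊆ SMset M ∧ S2 ⊆ SMset M ∧
    ∃ (o : O) (i : ℕ), (S1 ∪ S2) \ (S1 ∩ S2) = {(o, i), (o, i + 1)} ∧
      (o, i) ∈ S1 ∧ (o, i + 1) ∈ S2

/-- A CI-flip with respect to one of the chain statements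
`cs_i = {o_i ▷ o_{i+1} : o ∈ O, 1 ≤ i < m_M(o)}`. -/
def CsFlip (M : Multiset O) (S T : Finset (O × ℕ)) : Prop :=
  ∃ (o : O) (i : ℕ), 1 ≤ i ∧ i < M.count o ∧
    ∃ S' ⊆ SMset M \ {(o, i), (o, i + 1)},
      S = insert (o, i) S' ∧ T = insert (o, i + 1) S'

/-- `Ŝ⁺`: forward blocks `{o_1, ..., o_{m⁺(o)}}`. -/
def hatP (M : Multiset O) (c : CmIStmt O M) : Finset (O × ℕ) :=
  Finset.univ.biUnion fun o : O => block o 1 (c.mp.count o)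

/-- `Ŝ⁻`: backward blocks `{o_{m_M(o) - m⁻(o) + 1}, ..., o_{m_M(o)}}`. -/
def hatM (M : Multiset O) (c : CmIStmt O M) : Finset (O × ℕ) :=
  Finset.univ.biUnion fun o : O =>
    block o (M.count o - c.mm.count o + 1) (M.count o)

/-- `Ŝ₁`: backward blocks below `Ŝ⁻`. -/
def hat1 (M : Multiset O) (c : CmIStmt O M) : Finset (O × ℕ) :=
  Finset.univ.biUnion fun o : O =>
    block o (M.count o - c.mm.count o - c.m1.count o + 1)
      (M.count o - c.mm.count o)

/-- `Ŝ₂`: forward blocks just above `Ŝ⁺`. -/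
def hat2 (M : Multiset O) (c : CmIStmt O M) : Finset (O × ℕ) :=
  Finset.univ.biUnion fun o : O =>
    block o (c.mp.count o + 1) (c.mp.count o + c.m2.count o)

/-- CI-flip with respect to the translated statement `c̄` on the ground set
`S_M`. -/
def HatFlip (M : Multiset O) (c : CmIStmt O M) (Sa Sb : Finset (O × ℕ)) : Prop :=
  ∃ S' ⊆ SMset M \ (hatP M c ∪ hatM M c ∪ hat1 M c ∪ hat2 M c),
    Sa = S' ∪ hatP M c ∪ hat1 M c ∧ Sb = S' ∪ hatP M c ∪ hat2 M c

/-- Worsening flip with respect to the CI-net reduction `N_{S_M}`: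
`⊃`-flips within `S_M`, flips of translated statements, and chain flips. -/
def RedFlip (M : Multiset O) (N : Set (CmIStmt O M))
    (Sa Sb : Finset (O × ℕ)) : Prop :=
  (Sb ⊂ Sa ∧ Sa ⊆ SMset M) ∨ (∃ c ∈ N, HatFlip M c Sa Sb) ∨ CsFlip M Sa Sb

/-! The translation `c ↦ c̄` packs `M⁺` and `M₂` into the lowest indices of each object and
`M⁻`, `M₁` into the highest, leaving the copies with indices in
`(m⁺ + m₂, m_M - m⁻ - m₁]` free for the context `M'`. Forgetting the indices sends
`Ŝ⁺`, `Ŝ₁`, `Ŝ₂` to `M⁺`, `M₁`, `M₂` and is additive on disjoint unions, so a flip of `c̄`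
projects to a flip of `c`. Conversely, placing `M'` directly above `Ŝ⁺ ∪ Ŝ₂` lifts a flip of `c`
to one whose target is exactly `overline{M_b}`. -/

namespace Finset

variable {α β : Type*}

def fsts (S : Finset (α × β)) : Multiset α := S.val.map Prod.fst

lemma fsts_mono {S T : Finset (α × β)} (h : S ⊆ T) : fsts S ≤ fsts T :=
  Multiset.map_le_map (val_le_iff.2 h)

variable [DecidableEq α]

lemma count_fsts (S : Finset (α × β)) (a : α) :
    (fsts S).count a = (S.filter fun p => p.1 = a).card := by
  simp only [fsts, Multiset.count_map, card_def, filter_val, eq_comm]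

variable [DecidableEq β]

lemma fsts_union_of_disjoint {S T : Finset (α × β)} (h : Disjoint S T) :
    fsts (S ∪ T) = fsts S + fsts T := by
  rw [← disjUnion_eq_union S T h, fsts, disjUnion_val, Multiset.map_add]; rfl

lemma fsts_union_union {S T U : Finset (α × β)} (hST : Disjoint S T) (hSU : Disjoint S U)
    (hTU : Disjoint T U) : fsts (S ∪ T ∪ U) = fsts S + fsts T + fsts U := by
  rw [fsts_union_of_disjoint (disjoint_union_left.2 ⟨hSU, hTU⟩), fsts_union_of_disjoint hST]

end Finset

namespace CmIStmt

variable {ι : Type*} [DecidableEq ι] {M : Multiset ι} (c : CmIStmt ι M)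

lemma count_add_le (o : ι) :
    c.mp.count o + c.mm.count o + c.m1.count o + c.m2.count o ≤ M.count o := by
  have hp := Multiset.count_le_of_le o c.hp
  have hm := Multiset.count_le_of_le o c.hm
  have h1 := Multiset.count_le_of_le o c.h1
  have h2 := Multiset.count_le_of_le o c.h2
  have hd : min (c.m1.count o) (c.m2.count o) = 0 := by
    simpa [Multiset.count_inter] using congrArg (Multiset.count o) c.d12
  simp only [Multiset.count_sub, Multiset.count_add] at hm h1 h2
  omega

end CmIStmt

open Finset

def blocks (f g : O → ℕ) : Finset (O × ℕ) :=
  univ.biUnion fun o => block o (f o) (g o)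

lemma mem_blocks {f g : O → ℕ} {o : O} {j : ℕ} :
    (o, j) ∈ blocks f g ↔ f o ≤ j ∧ j ≤ g o := by
  simp [blocks, block]

lemma filter_blocks_eq_block (f g : O → ℕ) (o : O) :
    (blocks f g).filter (fun p => p.1 = o) = block o (f o) (g o) := by
  ext ⟨o', j⟩
  rw [mem_filter]
  constructor
  · rintro ⟨h, rfl⟩
    exact mem_image.2 ⟨j, mem_Icc.2 (mem_blocks.1 h), rfl⟩
  · intro h
    obtain ⟨i, hi, hij⟩ := mem_image.1 h
    obtain ⟨rfl, rfl⟩ := Prod.mk.inj hij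
    exact ⟨mem_blocks.2 (mem_Icc.1 hi), rfl⟩

lemma count_fsts_blocks (f g : O → ℕ) (o : O) :
    (fsts (blocks f g)).count o = g o + 1 - f o := by
  rw [count_fsts, filter_blocks_eq_block, block,
    card_image_of_injective _ fun _ _ h => (Prod.mk.inj h).2, Nat.card_Icc]

lemma inSS_iff {M M' : Multiset O} {S : Finset (O × ℕ)} :
    InSS M M' S ↔ S ⊆ SMset M ∧ fsts S = M' := by
  simp only [InSS, Multiset.ext, count_fsts]

section Translation

variable {M : Multiset O} {c : CmIStmt O M}

lemma mem_SMset {o : O} {j : ℕ} : (o, j) ∈ SMset M ↔ 1 ≤ j ∧ j ≤ M.count o := by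
  simp [SMset]

lemma mem_ovl {M' : Multiset O} {o : O} {j : ℕ} :
    (o, j) ∈ ovl M' ↔ 1 ≤ j ∧ j ≤ M'.count o := mem_blocks

lemma mem_hatP {o : O} {j : ℕ} : (o, j) ∈ hatP M c ↔ 1 ≤ j ∧ j ≤ c.mp.count o :=
  mem_blocks

lemma mem_hatM {o : O} {j : ℕ} :
    (o, j) ∈ hatM M c ↔ M.count o - c.mm.count o + 1 ≤ j ∧ j ≤ M.count o :=
  mem_blocks

lemma mem_hat1 {o : O} {j : ℕ} :
    (o, j) ∈ hat1 M c ↔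
      M.count o - c.mm.count o - c.m1.count o + 1 ≤ j ∧ j ≤ M.count o - c.mm.count o :=
  mem_blocks

lemma mem_hat2 {o : O} {j : ℕ} :
    (o, j) ∈ hat2 M c ↔ c.mp.count o + 1 ≤ j ∧ j ≤ c.mp.count o + c.m2.count o :=
  mem_blocks

variable (c)

lemma fsts_hatP : fsts (hatP M c) = c.mp :=
  Multiset.ext.2 fun o => by rw [hatP, ← blocks, count_fsts_blocks]; omega

lemma fsts_hat1 : fsts (hat1 M c) = c.m1 :=
  Multiset.ext.2 fun o => by
    rw [hat1, ← blocks, count_fsts_blocks]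
    have := c.count_add_le o
    omega

lemma fsts_hat2 : fsts (hat2 M c) = c.m2 :=
  Multiset.ext.2 fun o => by rw [hat2, ← blocks, count_fsts_blocks]; omega

lemma hatP_subset_SMset : hatP M c ⊆ SMset M := fun ⟨o, j⟩ h => by
  rw [mem_hatP] at h
  rw [mem_SMset]
  have := c.count_add_le o
  omega

lemma hat1_subset_SMset : hat1 M c ⊆ SMset M := fun ⟨o, j⟩ h => by
  rw [mem_hat1] at h
  rw [mem_SMset]
  have := c.count_add_le o
  omega

lemma disjoint_hatP_hat1 : Disjoint (hatP M c) (hat1 M c) := by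
  refine disjoint_left.2 fun ⟨o, j⟩ hP h1 => ?_
  rw [mem_hatP] at hP
  rw [mem_hat1] at h1
  have := c.count_add_le o
  omega

lemma disjoint_hatP_hat2 : Disjoint (hatP M c) (hat2 M c) := by
  refine disjoint_left.2 fun ⟨o, j⟩ hP h2 => ?_
  rw [mem_hatP] at hP
  rw [mem_hat2] at h2
  omega

lemma sdiff_hats_eq_blocks :
    SMset M \ (hatP M c ∪ hatM M c ∪ hat1 M c ∪ hat2 M c) =
      blocks (fun o => c.mp.count o + c.m2.count o + 1)
        (fun o => M.count o - c.mm.count o - c.m1.count o) := by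
  ext ⟨o, j⟩
  have := c.count_add_le o
  simp only [mem_sdiff, mem_union, mem_SMset, mem_hatP, mem_hatM, mem_hat1, mem_hat2,
    mem_blocks, not_or]
  omega

variable {S' : Finset (O × ℕ)}

lemma fsts_le_of_subset_sdiff_hats
    (hS' : S' ⊆ SMset M \ (hatP M c ∪ hatM M c ∪ hat1 M c ∪ hat2 M c)) :
    fsts S' ≤ M - (c.mp + c.mm + c.m1 + c.m2) := by
  refine (fsts_mono hS').trans (Multiset.le_iff_count.2 fun o => ?_)
  rw [sdiff_hats_eq_blocks, count_fsts_blocks]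
  simp only [Multiset.count_sub, Multiset.count_add]
  omega

lemma fsts_union_hatP_hat1
    (hS' : S' ⊆ SMset M \ (hatP M c ∪ hatM M c ∪ hat1 M c ∪ hat2 M c)) :
    fsts (S' ∪ hatP M c ∪ hat1 M c) = fsts S' + c.mp + c.m1 := by
  have hdisj := (subset_sdiff.1 hS').2
  rw [fsts_union_union (hdisj.mono_right (by grind)) (hdisj.mono_right (by grind))
    (disjoint_hatP_hat1 c), fsts_hatP, fsts_hat1]

lemma fsts_union_hatP_hat2
    (hS' : S' ⊆ SMset M \ (hatP M c ∪ hatM M c ∪ hat1 M c ∪ hat2 M c)) :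
    fsts (S' ∪ hatP M c ∪ hat2 M c) = fsts S' + c.mp + c.m2 := by
  have hdisj := (subset_sdiff.1 hS').2
  rw [fsts_union_union (hdisj.mono_right (by grind)) (hdisj.mono_right (by grind))
    (disjoint_hatP_hat2 c), fsts_hatP, fsts_hat2]

variable {c}

theorem CmFlipStmt.exists_inSS_hatFlip_ovl {Ma Mb : Multiset O} (h : CmFlipStmt M c Ma Mb) :
    ∃ Sa : Finset (O × ℕ), InSS M Ma Sa ∧ HatFlip M c Sa (ovl Mb) := by
  obtain ⟨M', hM', rfl, rfl⟩ := h
  have hM'o (o : O) : M'.count o + c.mp.count o + c.mm.count o + c.m1.count o +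
      c.m2.count o ≤ M.count o := by
    have hle := Multiset.count_le_of_le o hM'
    have := c.count_add_le o
    simp only [Multiset.count_sub, Multiset.count_add] at hle
    omega
  set S' := blocks (fun o => c.mp.count o + c.m2.count o + 1)
    (fun o => c.mp.count o + c.m2.count o + M'.count o)
  have hS' : S' ⊆ SMset M \ (hatP M c ∪ hatM M c ∪ hat1 M c ∪ hat2 M c) := by
    intro ⟨o, j⟩ h
    rw [mem_blocks] at h
    rw [sdiff_hats_eq_blocks, mem_blocks]
    have := hM'o o
    omega
  have hfsts : fsts S' = M' :=
    Multiset.ext.2 fun o => by rw [count_fsts_blocks]; omega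
  refine ⟨S' ∪ hatP M c ∪ hat1 M c, inSS_iff.2 ⟨?_, ?_⟩, S', hS', rfl, ?_⟩
  · exact union_subset (union_subset (hS'.trans sdiff_subset) (hatP_subset_SMset c))
      (hat1_subset_SMset c)
  · rw [fsts_union_hatP_hat1 c hS', hfsts]
  · ext ⟨o, j⟩
    simp only [mem_ovl, mem_union, S', mem_blocks, mem_hatP, mem_hat2, Multiset.count_add]
    omega

theorem HatFlip.cmFlipStmt {Ma Mb : Multiset O} {Sa Sb : Finset (O × ℕ)}
    (ha : InSS M Ma Sa) (hb : InSS M Mb Sb) (h : HatFlip M c Sa Sb) : CmFlipStmt M c Ma Mb := by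
  obtain ⟨S', hS', rfl, rfl⟩ := h
  refine ⟨fsts S', fsts_le_of_subset_sdiff_hats c hS', ?_, ?_⟩
  · rw [← (inSS_iff.1 ha).2, fsts_union_hatP_hat1 c hS']
  · rw [← (inSS_iff.1 hb).2, fsts_union_hatP_hat2 c hS']

end Translation

/-- if `Ma ⇝ Mb` is a CI-flip w.r.t. a `CᵐI`-statement `c`, then
some `S_{Ma} ∈ ss(Ma)` has a CI-flip to `overline{Mb}` w.r.t. `c̄`; conversely,
a CI-flip w.r.t. `c̄` between members of `ss(Ma)` and `ss(Mb)` yields a CI-flip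
`Ma ⇝ Mb` w.r.t. `c`. -/
theorem stmt_16 (M : Multiset O) (c : CmIStmt O M) (Ma Mb : Multiset O) :
    (CmFlipStmt M c Ma Mb →
      ∃ Sa : Finset (O × ℕ), InSS M Ma Sa ∧ HatFlip M c Sa (ovl Mb)) ∧
    (∀ Sa Sb : Finset (O × ℕ), InSS M Ma Sa → InSS M Mb Sb →
      HatFlip M c Sa Sb → CmFlipStmt M c Ma Mb) :=
  ⟨CmFlipStmt.exists_inSS_hatFlip_ovl, fun _ _ => HatFlip.cmFlipStmt⟩
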